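/- Let D and D₀ be p×p diagonal matrices with diagonal entries in [1/δ, δ] for some δ > 1, and set Δ_D = D − D₀. Then log|D| − log|D₀| + tr[(D⁻¹ − D₀⁻¹) D₀] ≥ (1/(8δ⁴)) ‖Δ_D‖_F². -/

import Mathlib

/-!
The matrices are diagonal, so the left-hand side is a sum of the scalar terms
`log a - log b + b / a - 1` with `a = D i i`, `b = D₀ i i`. As a function of `a` this vanishes at
`a = b` and has derivative `(a - b) / a²`, which dominates `(a - b) / M²` on the side away from `b`
as long as `a ≤ M`; integrating gives the bound `(a - b)² / (2 M²)`, and `M = δ` yields more than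
the claim since `1 / (8 δ⁴) ≤ 1 / (2 δ²)`.
-/

open Matrix Finset

lemma le_of_hasDerivAt_sign_sub {g g' : ℝ → ℝ} {a b : ℝ}
    (hg : ∀ x ∈ Set.uIcc a b, HasDerivAt g (g' x) x)
    (hsign : ∀ x ∈ Set.uIcc a b, 0 ≤ (x - b) * g' x) : g b ≤ g a := by
  have hcont : ContinuousOn g (Set.uIcc a b) := fun x hx =>
    (hg x hx).continuousAt.continuousWithinAt
  have hderiv : ∀ x ∈ interior (Set.uIcc a b),
      HasDerivWithinAt g (g' x) (interior (Set.uIcc a b)) x :=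
    fun x hx => (hg x (interior_subset hx)).hasDerivWithinAt
  rcases le_total a b with hab | hba
  · rw [Set.uIcc_of_le hab] at hcont hderiv hsign
    refine antitoneOn_of_hasDerivWithinAt_nonpos (convex_Icc a b) hcont hderiv (fun x hx => ?_)
      (Set.left_mem_Icc.2 hab) (Set.right_mem_Icc.2 hab) hab
    rw [interior_Icc] at hx
    exact nonpos_of_mul_nonneg_right (hsign x (Set.Ioo_subset_Icc_self hx)) (by linarith [hx.2])
  · rw [Set.uIcc_of_ge hba] at hcont hderiv hsign
    refine monotoneOn_of_hasDerivWithinAt_nonneg (convex_Icc b a) hcont hderiv (fun x hx => ?_)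
      (Set.left_mem_Icc.2 hba) (Set.right_mem_Icc.2 hba) hba
    rw [interior_Icc] at hx
    exact nonneg_of_mul_nonneg_right (hsign x (Set.Ioo_subset_Icc_self hx)) (by linarith [hx.1])

lemma sq_sub_div_le_log_sub_log_add_div_sub_one {a b M : ℝ} (ha : 0 < a) (hb : 0 < b)
    (haM : a ≤ M) (hbM : b ≤ M) :
    (a - b) ^ 2 / (2 * M ^ 2) ≤ Real.log a - Real.log b + b / a - 1 := by
  set g : ℝ → ℝ := fun x => Real.log x + b / x - (x - b) ^ 2 / (2 * M ^ 2)
  have hpos : ∀ x ∈ Set.uIcc a b, 0 < x := fun x hx => (lt_min ha hb).trans_le hx.1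
  have hle : ∀ x ∈ Set.uIcc a b, x ≤ M := fun x hx => hx.2.trans (max_le haM hbM)
  have hg : ∀ x ∈ Set.uIcc a b,
      HasDerivAt g ((x - b) * (1 / x ^ 2 - 1 / M ^ 2)) x := by
    intro x hx
    have hx := (hpos x hx).ne'
    have := ((Real.hasDerivAt_log hx).add ((hasDerivAt_inv hx).const_mul b)).sub
      ((((hasDerivAt_id x).sub_const b).pow 2).div_const (2 * M ^ 2))
    refine this.congr_deriv ?_
    simp only [id]
    field_simp
    ring
  have hsign : ∀ x ∈ Set.uIcc a b, 0 ≤ (x - b) * ((x - b) * (1 / x ^ 2 - 1 / M ^ 2)) := by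
    intro x hx
    rw [← mul_assoc]
    have hinv : 1 / M ^ 2 ≤ 1 / x ^ 2 := one_div_le_one_div_of_le (pow_pos (hpos x hx) 2)
      (pow_le_pow_left₀ (hpos x hx).le (hle x hx) 2)
    exact mul_nonneg (mul_self_nonneg _) (sub_nonneg.2 hinv)
  have := le_of_hasDerivAt_sign_sub hg hsign
  norm_num [g, div_self hb.ne'] at this
  linarith

namespace Matrix

variable {n : Type*} [Fintype n] [DecidableEq n]

lemma inv_diagonal_of_ne_zero {K : Type*} [Field K] {d : n → K} (hd : ∀ i, d i ≠ 0) :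
    (diagonal d)⁻¹ = diagonal d⁻¹ := by
  refine inv_eq_right_inv ?_
  rw [diagonal_mul_diagonal, ← diagonal_one]
  exact congrArg diagonal (funext fun i => mul_inv_cancel₀ (hd i))

lemma sum_sum_diagonal_sq {R : Type*} [Semiring R] (d : n → R) :
    ∑ i, ∑ j, diagonal d i j ^ 2 = ∑ i, d i ^ 2 := by
  refine Finset.sum_congr rfl fun i _ => ?_
  rw [Finset.sum_eq_single i (fun j _ hji => by simp [diagonal_apply_ne _ hji.symm]) (by simp),
    diagonal_apply_eq]

lemma log_det_sub_log_det_add_trace_diagonal {d d₀ : n → ℝ} (hd : ∀ i, d i ≠ 0)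
    (hd₀ : ∀ i, d₀ i ≠ 0) :
    Real.log (diagonal d).det - Real.log (diagonal d₀).det
        + (((diagonal d)⁻¹ - (diagonal d₀)⁻¹) * diagonal d₀).trace
      = ∑ i, (Real.log (d i) - Real.log (d₀ i) + d₀ i / d i - 1) := by
  rw [inv_diagonal_of_ne_zero hd, inv_diagonal_of_ne_zero hd₀, diagonal_sub,
    diagonal_mul_diagonal, trace_diagonal, det_diagonal, det_diagonal,
    Real.log_prod fun i _ => hd i, Real.log_prod fun i _ => hd₀ i,
    ← Finset.sum_sub_distrib, ← Finset.sum_add_distrib]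
  refine Finset.sum_congr rfl fun i _ => ?_
  rw [Pi.inv_apply, Pi.inv_apply, sub_mul, inv_mul_cancel₀ (hd₀ i), inv_mul_eq_div]
  ring

end Matrix

/-- Strong-convexity lower bound on the term `R₁` of the likelihood expansion:
for diagonal matrices `D`, `D₀` with entries in `[1/δ, δ]`,
`log|D| − log|D₀| + tr[(D⁻¹ − D₀⁻¹)D₀] ≥ ‖D − D₀‖_F² / (8δ⁴)`. -/
theorem R1_lower_bound (p : ℕ) (δ : ℝ) (hδ : 1 < δ)
    (D D₀ : Matrix (Fin p) (Fin p) ℝ)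
    (hD : D.IsDiag) (hD₀ : D₀.IsDiag)
    (hDb : ∀ i, D i i ∈ Set.Icc (1 / δ) δ)
    (hD₀b : ∀ i, D₀ i i ∈ Set.Icc (1 / δ) δ) :
    Real.log D.det - Real.log D₀.det + ((D⁻¹ - D₀⁻¹) * D₀).trace
      ≥ (1 / (8 * δ ^ 4)) * ∑ i, ∑ j, ((D - D₀) i j) ^ 2 := by
  obtain ⟨d, rfl⟩ : ∃ d, diagonal d = D := ⟨D.diag, hD.diagonal_diag⟩
  obtain ⟨d₀, rfl⟩ : ∃ d₀, diagonal d₀ = D₀ := ⟨D₀.diag, hD₀.diagonal_diag⟩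
  simp only [diagonal_apply_eq] at hDb hD₀b
  have hδ₀ : 0 < δ := by linarith
  have hDpos : ∀ i, 0 < d i := fun i => (one_div_pos.2 hδ₀).trans_le (hDb i).1
  have hD₀pos : ∀ i, 0 < d₀ i := fun i => (one_div_pos.2 hδ₀).trans_le (hD₀b i).1
  have hcoeff : 1 / (8 * δ ^ 4) ≤ 1 / (2 * δ ^ 2) :=
    one_div_le_one_div_of_le (by positivity) (by nlinarith [one_lt_pow₀ hδ (two_ne_zero (α := ℕ))])
  rw [ge_iff_le,
    log_det_sub_log_det_add_trace_diagonal (fun i => (hDpos i).ne') (fun i => (hD₀pos i).ne'),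
    diagonal_sub, sum_sum_diagonal_sq, mul_sum]
  refine sum_le_sum fun i _ => ?_
  calc 1 / (8 * δ ^ 4) * (d i - d₀ i) ^ 2
      ≤ (d i - d₀ i) ^ 2 / (2 * δ ^ 2) :=
        (mul_le_mul_of_nonneg_right hcoeff (sq_nonneg _)).trans_eq (by ring)
    _ ≤ _ := sq_sub_div_le_log_sub_log_add_div_sub_one (hDpos i) (hD₀pos i) (hDb i).2 (hD₀b i).2
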